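/- arXiv:1204.2561 — 2 statements merged into one kernel-verified Lean document; each statement's English description precedes it below -/
import Mathlib

section
/- Suppose 1, θ₁, θ₂ are linearly independent over ℚ. If there exists (η₁, η₂) ∈ ℝ² such that inf_ν ‖η₁ m_{ν,1} + η₂ m_{ν,2}‖ > 0, where (m_{ν,1}, m_{ν,2}) ranges over all best approximation vectors for (θ₁, θ₂) with weights (2/3, 1/3), then (η₁, η₂) ∈ BAD^Θ(2/3, 1/3). -/
open scoped BigOperators

/-- Distance from a real number to the nearest integer. -/
noncomputable def dni (x : ℝ) : ℝ := |x - round x|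

/-- `1, θ₁, θ₂` are linearly independent over `ℚ` (equivalently over `ℤ`). -/
def LinIndep (θ₁ θ₂ : ℝ) : Prop :=
  ∀ a b c : ℤ, (a : ℝ) + (b : ℝ) * θ₁ + (c : ℝ) * θ₂ = 0 → a = 0 ∧ b = 0 ∧ c = 0

/-- The weighted size `max(|m₁|, |m₂|²)` of an integer vector. -/
noncomputable def wsize (m : ℤ × ℤ) : ℝ := max |(m.1 : ℝ)| ((m.2 : ℝ) ^ 2)

/-- The value of the linear form `‖θ₁ m₁ + θ₂ m₂‖`. -/
noncomputable def zeta (θ₁ θ₂ : ℝ) (m : ℤ × ℤ) : ℝ := dni (θ₁ * m.1 + θ₂ * m.2)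

/-- `M = √(max(|m₁|, |m₂|²))`. -/
noncomputable def Mval (m : ℤ × ℤ) : ℝ := Real.sqrt (wsize m)

/-- `m = (m₁, m₂)` is a best approximation vector for `(θ₁, θ₂)` w.r.t. the
weighted norm `max(|x₁|, |x₂|²)`. -/
def IsBestApprox (θ₁ θ₂ : ℝ) (m : ℤ × ℤ) : Prop :=
  m ≠ 0 ∧ ∃ m₀ : ℤ,
    |(m₀ : ℝ) + θ₁ * m.1 + θ₂ * m.2| = zeta θ₁ θ₂ m ∧
    ∀ x₀ x₁ x₂ : ℤ,
      max |(x₁ : ℝ)| ((x₂ : ℝ) ^ 2) ≤ wsize m →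
      |(x₀ : ℝ) + θ₁ * x₁ + θ₂ * x₂| ≤ zeta θ₁ θ₂ m →
      ((x₀, x₁, x₂) = ((0 : ℤ), (0 : ℤ), (0 : ℤ)) ∨
        (x₀, x₁, x₂) = (m₀, m.1, m.2) ∨ (x₀, x₁, x₂) = (-m₀, -m.1, -m.2))

/-- An enumeration `m : ℕ → ℤ × ℤ` of all the best approximation vectors of
`(θ₁, θ₂)`, ordered so that `M_ν` is strictly increasing (each best
approximation appears up to sign). -/
def IsBestApproxSeq (θ₁ θ₂ : ℝ) (m : ℕ → ℤ × ℤ) : Prop :=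
  (∀ ν, IsBestApprox θ₁ θ₂ (m ν)) ∧
  (StrictMono fun ν => Mval (m ν)) ∧
  (∀ p : ℤ × ℤ, IsBestApprox θ₁ θ₂ p → ∃ ν, p = m ν ∨ p = -(m ν))

/-- `(η₁, η₂)` belongs to `BAD^Θ(2/3, 1/3)`. -/
def BADT (θ₁ θ₂ η₁ η₂ : ℝ) : Prop :=
  ∃ c > 0, ∀ q : ℕ, 0 < q →
    c ≤ max ((q : ℝ) ^ ((2 : ℝ) / 3) * dni (q * θ₁ - η₁))
          ((q : ℝ) ^ ((1 : ℝ) / 3) * dni (q * θ₂ - η₂))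

/-!
Let `γ > 0` be the lower bound on best approximation vectors, fix `q ≥ 1` and write
`α = ‖qθ₁ - η₁‖`, `β = ‖qθ₂ - η₂‖`. The identity
`η₁m₁ + η₂m₂ = -m₁(qθ₁ - η₁) - m₂(qθ₂ - η₂) + q(θ₁m₁ + θ₂m₂)` gives, for every integer vector `m`,
`‖η₁m₁ + η₂m₂‖ ≤ |m₁|α + |m₂|β + q‖θ₁m₁ + θ₂m₂‖`.
Take `T ≈ (2q/γ)^{1/3}`. By pigeonhole on the box `[0, T²] × [0, T]` some nonzero `m` with
`max(|m₁|, |m₂|²) ≤ T²` has `‖θ₁m₁ + θ₂m₂‖ < T⁻³ ≤ γ/(2q)`, and a minimiser of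
`‖θ₁m₁ + θ₂m₂‖` among such `m` is, by linear independence, a best approximation vector.
Hence `γ ≤ T²α + Tβ + γ/2`, i.e. `γ/2 ≤ T²α + Tβ ≪ q^{2/3}α + q^{1/3}β`.
-/

lemma dni_nonneg (x : ℝ) : 0 ≤ dni x := abs_nonneg _

lemma dni_le_half (x : ℝ) : dni x ≤ 1 / 2 := abs_sub_round x

lemma dni_le_abs_sub_intCast (x : ℝ) (n : ℤ) : dni x ≤ |x - n| := round_le x n

lemma dni_add_le (x y : ℝ) : dni (x + y) ≤ dni x + dni y :=
  calc dni (x + y) ≤ |(x - round x) + (y - round y)| := by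
        convert dni_le_abs_sub_intCast (x + y) (round x + round y) using 2; push_cast; ring
    _ ≤ dni x + dni y := abs_add_le _ _

lemma dni_intCast_mul_le (n : ℤ) (x : ℝ) : dni (n * x) ≤ |(n : ℝ)| * dni x :=
  calc dni (n * x) ≤ |n * (x - round x)| := by
        convert dni_le_abs_sub_intCast (n * x) (n * round x) using 2; push_cast; ring
    _ = |(n : ℝ)| * dni x := abs_mul _ _

lemma dni_sub_lt_of_floor_eq {N : ℝ} (hN : 0 < N) {x y : ℝ}
    (h : ⌊Int.fract x * N⌋ = ⌊Int.fract y * N⌋) : dni (x - y) < 1 / N := by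
  have hxy : |Int.fract x - Int.fract y| * N < 1 := by
    simpa [← sub_mul, abs_mul, abs_of_pos hN] using Int.abs_sub_lt_one_of_floor_eq_floor h
  calc dni (x - y) ≤ |Int.fract x - Int.fract y| := by
        convert dni_le_abs_sub_intCast (x - y) (⌊x⌋ - ⌊y⌋) using 2
        push_cast; unfold Int.fract; ring
    _ < 1 / N := by rwa [lt_div_iff₀ hN]

lemma round_eq_of_abs_sub_lt_half {α : Type*} [Field α] [LinearOrder α] [IsStrictOrderedRing α]
    [FloorRing α] {x : α} {n : ℤ} (h : |x - n| < 1 / 2) : round x = n :=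
  round_eq_iff.2 ⟨by linarith [abs_lt.1 h], by linarith [abs_lt.1 h]⟩

lemma dni_linear_combination_le (a b c : ℤ) (x y z : ℝ) :
    dni (a * x + b * y + c * z) ≤ |(a : ℝ)| * dni x + |(b : ℝ)| * dni y + |(c : ℝ)| * dni z := by
  grw [dni_add_le, dni_add_le, dni_intCast_mul_le, dni_intCast_mul_le, dni_intCast_mul_le]

lemma dni_mul_add_mul_le (θ₁ θ₂ η₁ η₂ : ℝ) (q : ℕ) (m : ℤ × ℤ) :
    dni (η₁ * m.1 + η₂ * m.2) ≤ |(m.1 : ℝ)| * dni (q * θ₁ - η₁) + |(m.2 : ℝ)| * dni (q * θ₂ - η₂)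
      + q * zeta θ₁ θ₂ m := by
  have key := dni_linear_combination_le (-m.1) (-m.2) q (q * θ₁ - η₁) (q * θ₂ - η₂)
    (θ₁ * m.1 + θ₂ * m.2)
  push_cast at key
  rw [abs_neg, abs_neg, Nat.abs_cast] at key
  rw [zeta]
  convert key using 2
  ring

lemma wsize_le_sq_iff {m : ℤ × ℤ} {T : ℝ} (hT : 0 ≤ T) :
    wsize m ≤ T ^ 2 ↔ |(m.1 : ℝ)| ≤ T ^ 2 ∧ |(m.2 : ℝ)| ≤ T := by
  rw [wsize, max_le_iff, sq_le_sq, abs_of_nonneg hT]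

lemma finite_setOf_wsize_le (W : ℝ) : {m : ℤ × ℤ | wsize m ≤ W}.Finite := by
  refine (Set.finite_Icc (-⌈W⌉, -⌈W⌉) (⌈W⌉, ⌈W⌉)).subset fun m hm => ?_
  have h₁ : |m.1| ≤ ⌈W⌉ := by
    have : |(m.1 : ℝ)| ≤ ⌈W⌉ := ((le_max_left _ _).trans hm).trans (Int.le_ceil W)
    exact_mod_cast this
  have h₂ : |m.2| ≤ ⌈W⌉ := by
    have : (m.2 : ℝ) ^ 2 ≤ ⌈W⌉ := ((le_max_right _ _).trans hm).trans (Int.le_ceil W)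
    exact (Int.natCast_natAbs m.2 ▸ Int.natAbs_le_self_sq m.2).trans (by exact_mod_cast this)
  rw [abs_le] at h₁ h₂
  exact ⟨⟨h₁.1, h₂.1⟩, ⟨h₁.2, h₂.2⟩⟩

lemma exists_wsize_le_zeta_lt (θ₁ θ₂ : ℝ) {T : ℕ} (hT : 0 < T) :
    ∃ m : ℤ × ℤ, m ≠ 0 ∧ wsize m ≤ (T : ℝ) ^ 2 ∧ zeta θ₁ θ₂ m < 1 / (T : ℝ) ^ 3 := by
  have hT3 : (0 : ℝ) < (T : ℝ) ^ 3 := by positivity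
  let box := Finset.Icc ((0 : ℤ), (0 : ℤ)) ((T : ℤ) ^ 2, (T : ℤ))
  let f : ℤ × ℤ → ℤ := fun p => ⌊Int.fract (θ₁ * p.1 + θ₂ * p.2) * (T : ℝ) ^ 3⌋
  have hf : ∀ p ∈ box, f p ∈ Finset.Ico (0 : ℤ) ((T : ℤ) ^ 3) := fun p _ =>
    Finset.mem_Ico.2 ⟨Int.floor_nonneg.2 (by positivity),
      Int.floor_lt.2 (by push_cast; exact mul_lt_of_lt_one_left hT3 (Int.fract_lt_one _))⟩
  have hcard : (Finset.Ico (0 : ℤ) ((T : ℤ) ^ 3)).card < box.card := by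
    simp only [box, Finset.card_Icc_prod, Int.card_Icc, Int.card_Ico, sub_zero, ← Nat.cast_pow,
      ← Nat.cast_add_one, Int.toNat_natCast]
    nlinarith
  obtain ⟨p, hp, p', hp', hne, hpp'⟩ := Finset.exists_ne_map_eq_of_card_lt_of_maps_to hcard hf
  simp only [box, Finset.mem_Icc] at hp hp'
  refine ⟨p - p', sub_ne_zero.2 hne, (wsize_le_sq_iff (by positivity)).2 ⟨?_, ?_⟩, ?_⟩
  · exact_mod_cast abs_sub_le_of_nonneg_of_le hp.1.1 hp.2.1 hp'.1.1 hp'.2.1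
  · exact_mod_cast abs_sub_le_of_nonneg_of_le hp.1.2 hp.2.2 hp'.1.2 hp'.2.2
  · convert dni_sub_lt_of_floor_eq hT3 hpp' using 2
    simp only [zeta, Prod.fst_sub, Prod.snd_sub, Int.cast_sub]
    congr 1; ring

lemma exists_zeta_le_of_wsize_le (θ₁ θ₂ : ℝ) {W : ℝ} {p : ℤ × ℤ} (hp : p ≠ 0) (hpW : wsize p ≤ W) :
    ∃ m : ℤ × ℤ, m ≠ 0 ∧ wsize m ≤ W ∧
      ∀ x : ℤ × ℤ, x ≠ 0 → wsize x ≤ W → zeta θ₁ θ₂ m ≤ zeta θ₁ θ₂ x := by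
  obtain ⟨m, ⟨hm, hmW⟩, hmin⟩ := Set.exists_min_image {x | x ≠ 0 ∧ wsize x ≤ W} (zeta θ₁ θ₂)
    ((finite_setOf_wsize_le W).subset fun _ hx => hx.2) ⟨p, hp, hpW⟩
  exact ⟨m, hm, hmW, fun x hx hxW => hmin x ⟨hx, hxW⟩⟩

lemma exists_nat_cube_between {c q : ℝ} (hc : 0 < c) (hq : 1 ≤ q) :
    ∃ T : ℕ, 0 < T ∧ c * q ≤ (T : ℝ) ^ 3 ∧ (T : ℝ) ≤ (c ^ ((1 : ℝ) / 3) + 1) * q ^ ((1 : ℝ) / 3) := by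
  set R := (c * q) ^ ((1 : ℝ) / 3) with hR
  have hR0 : 0 < R := by positivity
  have hR3 : R ^ 3 = c * q := by
    rw [hR, ← Real.rpow_natCast, ← Real.rpow_mul (by positivity)]; norm_num
  refine ⟨⌈R⌉₊, Nat.ceil_pos.2 hR0, hR3 ▸ pow_le_pow_left₀ hR0.le (Nat.le_ceil R) 3, ?_⟩
  have hq3 : 1 ≤ q ^ ((1 : ℝ) / 3) := Real.one_le_rpow hq (by norm_num)
  calc (⌈R⌉₊ : ℝ) ≤ R + 1 := (Nat.ceil_lt_add_one hR0.le).le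
    _ ≤ c ^ ((1 : ℝ) / 3) * q ^ ((1 : ℝ) / 3) + q ^ ((1 : ℝ) / 3) := by
        rw [hR, Real.mul_rpow hc.le (by positivity)]; linarith
    _ = _ := by ring

namespace LinIndep

variable {θ₁ θ₂ : ℝ}

lemma zeta_lt_half (h : LinIndep θ₁ θ₂) {m : ℤ × ℤ} (hm : m ≠ 0) : zeta θ₁ θ₂ m < 1 / 2 := by
  refine (dni_le_half _).lt_of_ne fun heq => hm ?_
  set w := θ₁ * m.1 + θ₂ * m.2
  obtain ⟨s, hs, hws⟩ : ∃ s : ℤ, (s = 1 ∨ s = -1) ∧ 2 * (w - round w) = s := by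
    rcases abs_eq (by norm_num : (0 : ℝ) ≤ 1 / 2) |>.1 heq with e | e
    · exact ⟨1, by norm_num, by rw [e]; norm_num⟩
    · exact ⟨-1, by norm_num, by rw [e]; norm_num⟩
  obtain ⟨-, h₁, h₂⟩ := h (-2 * round w - s) (2 * m.1) (2 * m.2) (by push_cast; linarith)
  exact Prod.ext (by simpa using h₁) (by simpa using h₂)

lemma eq_or_eq_neg_of_zeta_eq (h : LinIndep θ₁ θ₂) {x m : ℤ × ℤ}
    (hxm : zeta θ₁ θ₂ x = zeta θ₁ θ₂ m) : x = m ∨ x = -m := by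
  set u := θ₁ * x.1 + θ₂ * x.2
  set w := θ₁ * m.1 + θ₂ * m.2
  rcases abs_eq_abs.1 hxm with e | e
  · obtain ⟨-, h₁, h₂⟩ := h (round w - round u) (x.1 - m.1) (x.2 - m.2) (by push_cast; linarith)
    exact .inl (Prod.ext (by omega) (by omega))
  · obtain ⟨-, h₁, h₂⟩ := h (-round u - round w) (x.1 + m.1) (x.2 + m.2) (by push_cast; linarith)
    exact .inr (Prod.ext (by simp; omega) (by simp; omega))

lemma isBestApprox_of_forall_zeta_le (h : LinIndep θ₁ θ₂) {m : ℤ × ℤ} (hm : m ≠ 0)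
    (hmin : ∀ x : ℤ × ℤ, x ≠ 0 → wsize x ≤ wsize m → zeta θ₁ θ₂ m ≤ zeta θ₁ θ₂ x) :
    IsBestApprox θ₁ θ₂ m := by
  have hhalf := h.zeta_lt_half hm
  refine ⟨hm, -round (θ₁ * m.1 + θ₂ * m.2), by rw [zeta, dni]; push_cast; congr 1; ring,
    fun x₀ x₁ x₂ hxW hxz => ?_⟩
  have hx₀ : |(x₀ : ℝ) + θ₁ * x₁ + θ₂ * x₂| < 1 / 2 := hxz.trans_lt hhalf
  by_cases hx : ((x₁, x₂) : ℤ × ℤ) = 0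
  · obtain ⟨rfl, rfl⟩ := Prod.mk_eq_zero.1 hx
    have : |x₀| < 1 := by exact_mod_cast (by simpa using hx₀.trans (by norm_num) : |(x₀ : ℝ)| < 1)
    exact .inl (by simp [Int.abs_lt_one_iff.1 this])
  have heq : zeta θ₁ θ₂ (x₁, x₂) = zeta θ₁ θ₂ m := by
    refine le_antisymm ?_ (hmin _ hx hxW)
    calc zeta θ₁ θ₂ (x₁, x₂) ≤ |θ₁ * x₁ + θ₂ * x₂ - ((-x₀ : ℤ) : ℝ)| := dni_le_abs_sub_intCast _ _
      _ ≤ zeta θ₁ θ₂ m := by convert hxz using 2; push_cast; ring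
  rcases h.eq_or_eq_neg_of_zeta_eq heq with e | e
  · obtain ⟨rfl, rfl⟩ := Prod.ext_iff.1 e
    have hx₀' : |θ₁ * m.1 + θ₂ * m.2 - ((-x₀ : ℤ) : ℝ)| < 1 / 2 := by
      convert hx₀ using 2; push_cast; ring
    have : round (θ₁ * m.1 + θ₂ * m.2) = -x₀ := round_eq_of_abs_sub_lt_half hx₀'
    exact .inr (.inl (by simp [this]))
  · obtain ⟨rfl, rfl⟩ := Prod.ext_iff.1 e
    have hx₀' : |θ₁ * m.1 + θ₂ * m.2 - (x₀ : ℝ)| < 1 / 2 := by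
      rw [abs_sub_comm]; convert hx₀ using 2; push_cast [Prod.fst_neg, Prod.snd_neg]; ring
    have : round (θ₁ * m.1 + θ₂ * m.2) = x₀ := round_eq_of_abs_sub_lt_half hx₀'
    exact .inr (.inr (by simp [this]))

lemma exists_isBestApprox (h : LinIndep θ₁ θ₂) {T : ℕ} (hT : 0 < T) :
    ∃ m : ℤ × ℤ, IsBestApprox θ₁ θ₂ m ∧ wsize m ≤ (T : ℝ) ^ 2 ∧ zeta θ₁ θ₂ m < 1 / (T : ℝ) ^ 3 := by
  obtain ⟨p, hp, hpW, hpz⟩ := exists_wsize_le_zeta_lt θ₁ θ₂ hT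
  obtain ⟨m, hm, hmW, hmin⟩ := exists_zeta_le_of_wsize_le θ₁ θ₂ hp hpW
  exact ⟨m, h.isBestApprox_of_forall_zeta_le hm fun x hx hxW => hmin x hx (hxW.trans hmW), hmW,
    (hmin p hp hpW).trans_lt hpz⟩

lemma exists_isBestApprox_abs_le_rpow (h : LinIndep θ₁ θ₂) {c q : ℝ} (hc : 0 < c) (hq : 1 ≤ q) :
    ∃ m : ℤ × ℤ, IsBestApprox θ₁ θ₂ m ∧
      |(m.1 : ℝ)| ≤ ((c ^ ((1 : ℝ) / 3) + 1) * q ^ ((1 : ℝ) / 3)) ^ 2 ∧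
      |(m.2 : ℝ)| ≤ (c ^ ((1 : ℝ) / 3) + 1) * q ^ ((1 : ℝ) / 3) ∧ q * zeta θ₁ θ₂ m < 1 / c := by
  obtain ⟨T, hT, hTq, hTK⟩ := exists_nat_cube_between hc hq
  obtain ⟨m, hm, hmW, hmz⟩ := h.exists_isBestApprox hT
  obtain ⟨hm₁, hm₂⟩ := (wsize_le_sq_iff T.cast_nonneg).1 hmW
  refine ⟨m, hm, hm₁.trans (by gcongr), hm₂.trans hTK, ?_⟩
  have hz : 0 ≤ zeta θ₁ θ₂ m := dni_nonneg _
  calc q * zeta θ₁ θ₂ m ≤ (T : ℝ) ^ 3 / c * zeta θ₁ θ₂ m := by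
        gcongr; rwa [le_div_iff₀ hc, mul_comm]
    _ < (T : ℝ) ^ 3 / c * (1 / (T : ℝ) ^ 3) := by gcongr
    _ = 1 / c := by field_simp

end LinIndep

/-- if the linear form at all best approximation vectors is
bounded away from zero, then `(η₁,η₂) ∈ BAD^Θ(2/3,1/3)`. -/
theorem stmt_1 (θ₁ θ₂ : ℝ) (h : LinIndep θ₁ θ₂) (η₁ η₂ : ℝ)
    (hinf : ∃ γ > (0 : ℝ), ∀ m : ℤ × ℤ, IsBestApprox θ₁ θ₂ m →
      γ ≤ dni (η₁ * m.1 + η₂ * m.2)) :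
    BADT θ₁ θ₂ η₁ η₂ := by
  obtain ⟨γ, hγ, hlow⟩ := hinf
  set K : ℝ := (2 / γ) ^ ((1 : ℝ) / 3) + 1
  refine ⟨γ / (2 * (K ^ 2 + K)), by positivity, fun q hq => ?_⟩
  set Q := (q : ℝ) ^ ((1 : ℝ) / 3)
  obtain ⟨m, hm, hm₁, hm₂, hmz⟩ :=
    h.exists_isBestApprox_abs_le_rpow (c := 2 / γ) (by positivity) (Nat.one_le_cast.2 hq)
  have hQ : Q ^ 2 = (q : ℝ) ^ ((2 : ℝ) / 3) := by
    rw [← Real.rpow_natCast, ← Real.rpow_mul q.cast_nonneg]; norm_num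
  set M := max ((q : ℝ) ^ ((2 : ℝ) / 3) * dni (q * θ₁ - η₁)) (Q * dni (q * θ₂ - η₂))
  suffices γ / 2 ≤ (K ^ 2 + K) * M by
    rw [div_le_iff₀ (by positivity)]; linarith
  have hα := dni_nonneg (q * θ₁ - η₁)
  have hβ := dni_nonneg (q * θ₂ - η₂)
  calc γ / 2 ≤ |(m.1 : ℝ)| * dni (q * θ₁ - η₁) + |(m.2 : ℝ)| * dni (q * θ₂ - η₂) := by
        rw [one_div_div] at hmz
        linarith [hlow m hm, dni_mul_add_mul_le θ₁ θ₂ η₁ η₂ q m]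
    _ ≤ (K * Q) ^ 2 * dni (q * θ₁ - η₁) + K * Q * dni (q * θ₂ - η₂) := by gcongr
    _ = K ^ 2 * ((q : ℝ) ^ ((2 : ℝ) / 3) * dni (q * θ₁ - η₁)) + K * (Q * dni (q * θ₂ - η₂)) := by
        rw [mul_pow, ← hQ]; ring
    _ ≤ K ^ 2 * M + K * M := by gcongr; exacts [le_max_left _ _, le_max_right _ _]
    _ = (K ^ 2 + K) * M := by ring
end

section
/- Let 1, θ₁, θ₂ be linearly independent over ℚ. Then there exists (η₁, η₂) ∈ ℝ² such that inf_ν ‖η₁ m_{ν,1} + η₂ m_{ν,2}‖ > 0, where (m_{ν,1}, m_{ν,2}) runs over all best approximation vectors of (θ₁, θ₂) with respect to the weighted norm max(|x₁|, |x₂|²). -/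
open scoped BigOperators

/-!
Flip the sign of each best approximation `m` so that, with its integer `m₀`, `v = (m₀, m)` is a
relative minimum of `ℤ³` with `m₀ + θ₁ m₁ + θ₂ m₂ > 0` (linear independence excludes `= 0`).
Two such minima `v ≠ w` with `wsize v ≤ wsize w` are separated, `wsize (w - v) > wsize v`:
otherwise the minimality of `w` (tested on `v`) or of `v` (tested on `w - v`) forces `w = v`.
Hence each block `2 ^ (32 n) ≤ wsize < 2 ^ (32 n + 32)` contains at most `512` of these vectors.

`η` is the common point of nested boxes of size `2⁻³²⁽ⁿ⁺¹⁾ × 2⁻¹⁶⁽ⁿ⁺²⁾`. Across the `n`-th box,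
`η₁ m₁ + η₂ m₂` moves by at most `2` for `m` in block `n`, so few of its `2 ^ 32 × 2 ^ 16`
subboxes meet a strip where this value is within `2⁻⁶⁴` of an integer, and some subbox avoids
them all.
-/

open Finset

lemma dni_neg (x : ℝ) : dni (-x) = dni x := by
  have key : ∀ y : ℝ, dni (-y) ≤ dni y := fun y => by
    simpa [dni, abs_sub_comm, neg_add_eq_sub] using round_le (-y) (-round y)
  exact le_antisymm (key x) (by simpa using key (-x))

lemma wsize_neg (m : ℤ × ℤ) : wsize (-m) = wsize m := by
  simp [wsize]

lemma wsize_nonneg (m : ℤ × ℤ) : 0 ≤ wsize m :=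
  (abs_nonneg _).trans (le_max_left _ _)

lemma one_le_wsize {m : ℤ × ℤ} (hm : m ≠ 0) : 1 ≤ wsize m := by
  by_cases h₁ : m.1 = 0
  · have h₂ : m.2 ≠ 0 := fun h₂ => hm (Prod.ext h₁ h₂)
    have : (1 : ℝ) ≤ |(m.2 : ℝ)| := by exact_mod_cast Int.one_le_abs h₂
    exact (one_le_sq_iff_one_le_abs _).2 this |>.trans (le_max_right _ _)
  · have : (1 : ℝ) ≤ |(m.1 : ℝ)| := by exact_mod_cast Int.one_le_abs h₁
    exact this.trans (le_max_left _ _)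

noncomputable def dyadicShell (m : ℤ × ℤ) : ℕ := Nat.log 2 ⌊wsize m⌋₊

lemma two_pow_dyadicShell_le_wsize {m : ℤ × ℤ} (hm : m ≠ 0) :
    (2 : ℝ) ^ dyadicShell m ≤ wsize m := by
  have hfloor : ⌊wsize m⌋₊ ≠ 0 := (Nat.floor_pos.2 (one_le_wsize hm)).ne'
  calc (2 : ℝ) ^ dyadicShell m ≤ ⌊wsize m⌋₊ := by exact_mod_cast Nat.pow_log_le_self 2 hfloor
    _ ≤ wsize m := Nat.floor_le (wsize_nonneg m)

lemma wsize_lt_two_pow_dyadicShell_succ (m : ℤ × ℤ) :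
    wsize m < 2 ^ (dyadicShell m + 1) := by
  have := (Nat.floor_lt (wsize_nonneg m)).1 (Nat.lt_pow_succ_log_self one_lt_two ⌊wsize m⌋₊)
  exact_mod_cast this

section MinimalPoints

/-- On `ℤ³ = ℤ × (ℤ × ℤ)`, so that `v.2` is the part of `v` measured by `wsize`. -/
noncomputable def linForm (θ₁ θ₂ : ℝ) : ℤ × ℤ × ℤ →+ ℝ where
  toFun v := v.1 + θ₁ * v.2.1 + θ₂ * v.2.2
  map_zero' := by simp
  map_add' v w := by simp only [Prod.fst_add, Prod.snd_add, Int.cast_add]; ring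

@[simp]
lemma linForm_apply (θ₁ θ₂ : ℝ) (v : ℤ × ℤ × ℤ) :
    linForm θ₁ θ₂ v = v.1 + θ₁ * v.2.1 + θ₂ * v.2.2 := rfl

/-- The parallelepiped condition of `IsBestApprox`, for an arbitrary `v = (m₀, m) ∈ ℤ³`. -/
def IsMinimalPoint (θ₁ θ₂ : ℝ) (v : ℤ × ℤ × ℤ) : Prop :=
  ∀ x : ℤ × ℤ × ℤ, wsize x.2 ≤ wsize v.2 → |linForm θ₁ θ₂ x| ≤ |linForm θ₁ θ₂ v| →
    x = 0 ∨ x = v ∨ x = -v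

variable {θ₁ θ₂ : ℝ}

lemma IsBestApprox.exists_isMinimalPoint {m : ℤ × ℤ} (hm : IsBestApprox θ₁ θ₂ m) :
    ∃ m₀ : ℤ, IsMinimalPoint θ₁ θ₂ (m₀, m) := by
  obtain ⟨-, m₀, hζ, hmin⟩ := hm
  refine ⟨m₀, fun x hx hL => hmin x.1 x.2.1 x.2.2 hx ?_⟩
  exact hL.trans_eq hζ

lemma IsMinimalPoint.neg {v : ℤ × ℤ × ℤ} (hv : IsMinimalPoint θ₁ θ₂ v) :
    IsMinimalPoint θ₁ θ₂ (-v) := by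
  intro x hx hL
  rw [Prod.snd_neg, wsize_neg, map_neg, abs_neg] at *
  rcases hv x hx hL with h | h | h
  · exact Or.inl h
  · exact Or.inr (Or.inr (by rw [neg_neg, h]))
  · exact Or.inr (Or.inl h)

lemma linForm_ne_zero (h : LinIndep θ₁ θ₂) {v : ℤ × ℤ × ℤ} (hv : v.2 ≠ 0) :
    linForm θ₁ θ₂ v ≠ 0 := fun h0 => by
  obtain ⟨-, h₁, h₂⟩ := h v.1 v.2.1 v.2.2 (by rw [linForm_apply] at h0; linarith)
  exact hv (Prod.ext h₁ h₂)

lemma IsMinimalPoint.eq_of_wsize_sub_le {v w : ℤ × ℤ × ℤ} (hv : IsMinimalPoint θ₁ θ₂ v)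
    (hw : IsMinimalPoint θ₁ θ₂ w) (hv₀ : 0 < linForm θ₁ θ₂ v) (hw₀ : 0 < linForm θ₁ θ₂ w)
    (hvw : wsize v.2 ≤ wsize w.2) (hsub : wsize (w - v).2 ≤ wsize v.2) : w = v := by
  rcases le_or_gt (linForm θ₁ θ₂ v) (linForm θ₁ θ₂ w) with hle | hlt
  · rcases hw v hvw (by rwa [abs_of_pos hv₀, abs_of_pos hw₀]) with h | h | h
    · simp [h] at hv₀
    · exact h.symm
    · rw [h, map_neg] at hv₀
      linarith
  · have hL : |linForm θ₁ θ₂ (w - v)| ≤ |linForm θ₁ θ₂ v| := by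
      rw [map_sub, abs_of_pos hv₀, abs_le]
      constructor <;> linarith
    rcases hv (w - v) hsub hL with h | h | h
    · exact sub_eq_zero.1 h
    · rw [sub_eq_iff_eq_add.1 h, map_add] at hlt
      linarith
    · rw [sub_eq_iff_eq_add.1 h, neg_add_cancel, map_zero] at hw₀
      exact absurd hw₀ (lt_irrefl 0)

def posMinimalTails (θ₁ θ₂ : ℝ) : Set (ℤ × ℤ) :=
  {m | ∃ m₀ : ℤ, IsMinimalPoint θ₁ θ₂ (m₀, m) ∧ 0 < linForm θ₁ θ₂ (m₀, m)}

lemma IsBestApprox.mem_posMinimalTails_or_neg_mem (h : LinIndep θ₁ θ₂) {m : ℤ × ℤ}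
    (hm : IsBestApprox θ₁ θ₂ m) : m ∈ posMinimalTails θ₁ θ₂ ∨ -m ∈ posMinimalTails θ₁ θ₂ := by
  obtain ⟨m₀, hmin⟩ := hm.exists_isMinimalPoint
  rcases (linForm_ne_zero h (v := (m₀, m)) hm.1).lt_or_gt with hneg | hpos
  · refine Or.inr ⟨-m₀, hmin.neg, ?_⟩
    rw [← Prod.neg_mk, map_neg]
    linarith
  · exact Or.inl ⟨m₀, hmin, hpos⟩

lemma posMinimalTails_eq_of_wsize_sub_le {m m' : ℤ × ℤ} (hm : m ∈ posMinimalTails θ₁ θ₂)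
    (hm' : m' ∈ posMinimalTails θ₁ θ₂) (hsub : wsize (m - m') ≤ min (wsize m) (wsize m')) :
    m = m' := by
  obtain ⟨m₀, hmin, hpos⟩ := hm
  obtain ⟨m₀', hmin', hpos'⟩ := hm'
  rcases le_total (wsize m) (wsize m') with hle | hle
  · have := hmin.eq_of_wsize_sub_le hmin' hpos hpos' hle
      (by rw [Prod.snd_sub, ← neg_sub, wsize_neg]; exact hsub.trans (min_le_left _ _))
    exact (congrArg Prod.snd this).symm
  · have := hmin'.eq_of_wsize_sub_le hmin hpos' hpos hle
      (by rw [Prod.snd_sub]; exact hsub.trans (min_le_right _ _))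
    exact congrArg Prod.snd this

end MinimalPoints

def block (n : ℕ) : Set (ℤ × ℤ) :=
  {m | (2 : ℝ) ^ (32 * n) ≤ wsize m ∧ wsize m < 2 ^ (32 * n + 32)}

lemma ne_zero_of_mem_block {m : ℤ × ℤ} {n : ℕ} (hm : m ∈ block n) : m ≠ 0 := by
  rintro rfl
  have h := hm.1
  rw [show wsize 0 = 0 by simp [wsize]] at h
  exact absurd h (not_le.2 (by positivity))

lemma mem_block_dyadicShell_div {m : ℤ × ℤ} (hm : m ≠ 0) : m ∈ block (dyadicShell m / 32) :=
  ⟨(pow_le_pow_right₀ one_le_two (Nat.mul_div_le _ _)).trans (two_pow_dyadicShell_le_wsize hm),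
    (wsize_lt_two_pow_dyadicShell_succ m).trans_le (pow_le_pow_right₀ one_le_two (by omega))⟩

lemma dyadicShell_mem_Ico_of_mem_block {m : ℤ × ℤ} {n : ℕ} (hm : m ∈ block n) :
    32 * n ≤ dyadicShell m ∧ dyadicShell m < 32 * n + 32 := by
  constructor
  · have := hm.1.trans_lt (wsize_lt_two_pow_dyadicShell_succ m)
    have := (pow_lt_pow_iff_right₀ one_lt_two).1 this
    omega
  · exact (pow_lt_pow_iff_right₀ one_lt_two).1
      ((two_pow_dyadicShell_le_wsize (ne_zero_of_mem_block hm)).trans_lt hm.2)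

lemma Int.ediv_mem_Icc_of_abs_lt {a d : ℤ} (hd : 0 < d) (h : |a| < 2 * d) :
    a / d ∈ Icc (-2) 1 := by
  rw [abs_lt] at h
  exact mem_Icc.2 ⟨(Int.le_ediv_iff_mul_le hd).2 (by linarith),
    Int.lt_add_one_iff.1 ((Int.ediv_lt_iff_lt_mul hd).2 (by linarith))⟩

lemma Int.abs_sub_lt_of_ediv_eq {a b d : ℤ} (hd : 0 < d) (h : a / d = b / d) : |a - b| < d := by
  have ha := Int.mul_ediv_add_emod a d
  have hb := Int.mul_ediv_add_emod b d
  have := Int.emod_nonneg a hd.ne'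
  have := Int.emod_nonneg b hd.ne'
  have := Int.emod_lt_of_pos a hd
  have := Int.emod_lt_of_pos b hd
  rw [h] at ha
  rw [abs_lt]
  constructor <;> linarith

noncomputable def dyadicCell (m : ℤ × ℤ) : ℤ × ℤ :=
  (m.1 / 2 ^ dyadicShell m, m.2 / 2 ^ (dyadicShell m / 2))

lemma dyadicCell_mem (m : ℤ × ℤ) : dyadicCell m ∈ Icc (-2) 1 ×ˢ Icc (-2) 1 := by
  set j := dyadicShell m
  have hW := wsize_lt_two_pow_dyadicShell_succ m
  refine mem_product.2 ⟨Int.ediv_mem_Icc_of_abs_lt (by positivity) ?_,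
    Int.ediv_mem_Icc_of_abs_lt (by positivity) ?_⟩
  · have : |(m.1 : ℝ)| < 2 * 2 ^ j := by
      rw [← pow_succ']; exact (le_max_left _ _).trans_lt hW
    exact_mod_cast this
  · have hsq : (m.2 : ℝ) ^ 2 < (2 * 2 ^ (j / 2)) ^ 2 := by
      calc (m.2 : ℝ) ^ 2 < 2 ^ (j + 1) := (le_max_right _ _).trans_lt hW
        _ ≤ 2 ^ (2 * (j / 2) + 2) := pow_le_pow_right₀ one_le_two (by omega)
        _ = (2 * 2 ^ (j / 2)) ^ 2 := by ring
    exact_mod_cast abs_lt_of_sq_lt_sq hsq (by positivity)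

lemma wsize_sub_lt_of_dyadicCell_eq {m m' : ℤ × ℤ} (hj : dyadicShell m = dyadicShell m')
    (hc : dyadicCell m = dyadicCell m') : wsize (m - m') < 2 ^ dyadicShell m := by
  set j := dyadicShell m
  simp only [dyadicCell, ← hj, Prod.mk.injEq] at hc
  have h₁ : |m.1 - m'.1| < 2 ^ j := Int.abs_sub_lt_of_ediv_eq (by positivity) hc.1
  have h₂ : |m.2 - m'.2| < 2 ^ (j / 2) := Int.abs_sub_lt_of_ediv_eq (by positivity) hc.2
  refine max_lt (by exact_mod_cast h₁) ?_
  calc ((m - m').2 : ℝ) ^ 2 = |((m.2 - m'.2 : ℤ) : ℝ)| ^ 2 := by simp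
    _ < (2 ^ (j / 2)) ^ 2 := by gcongr; exact_mod_cast h₂
    _ ≤ 2 ^ j := by rw [← pow_mul]; exact pow_le_pow_right₀ one_le_two (by omega)

/-- `512 = 32 * 16`: at most one point in each of the `16` cells of each of the `32` dyadic
shells of a block. -/
lemma encard_inter_block_le (S : Set (ℤ × ℤ))
    (hS : ∀ m ∈ S, ∀ m' ∈ S, wsize (m - m') ≤ min (wsize m) (wsize m') → m = m') (n : ℕ) :
    (S ∩ block n).encard ≤ 512 := by
  let f : ℤ × ℤ → ℕ × ℤ × ℤ := fun m => (dyadicShell m - 32 * n, dyadicCell m)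
  let T : Finset (ℕ × ℤ × ℤ) := range 32 ×ˢ Icc (-2) 1 ×ˢ Icc (-2) 1
  have hmaps : Set.MapsTo f (S ∩ block n) T := fun m hm => by
    have := dyadicShell_mem_Ico_of_mem_block hm.2
    exact mem_product.2
      ⟨mem_range.2 (show dyadicShell m - 32 * n < 32 by omega), dyadicCell_mem m⟩
  have hinj : Set.InjOn f (S ∩ block n) := by
    intro m hm m' hm' hf
    simp only [f, Prod.mk.injEq] at hf
    have := dyadicShell_mem_Ico_of_mem_block hm.2
    have := dyadicShell_mem_Ico_of_mem_block hm'.2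
    have hj : dyadicShell m = dyadicShell m' := by omega
    have hlt := wsize_sub_lt_of_dyadicCell_eq hj hf.2
    refine hS m hm.1 m' hm'.1 (le_min ?_ ?_)
    · exact hlt.le.trans (two_pow_dyadicShell_le_wsize (ne_zero_of_mem_block hm.2))
    · exact hlt.le.trans (hj ▸ two_pow_dyadicShell_le_wsize (ne_zero_of_mem_block hm'.2))
  calc (S ∩ block n).encard ≤ (T : Set (ℕ × ℤ × ℤ)).encard :=
        Set.encard_le_encard_of_injOn hmaps hinj
    _ = 512 := by rw [Set.encard_coe_eq_coe_finsetCard]; simp [T]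

lemma card_filter_abs_le (s : Finset ℕ) (A d w : ℝ) (hA : A ≠ 0) :
    #{i ∈ s | |A * (i : ℕ) + d| ≤ w} ≤ ⌊2 * w / |A|⌋₊ + 1 := by
  set F := {i ∈ s | |A * (i : ℕ) + d| ≤ w}
  rcases F.eq_empty_or_nonempty with hF | hF
  · simp [hF]
  set i₀ := F.min' hF
  have hi₀ : |A * i₀ + d| ≤ w := (mem_filter.1 (F.min'_mem hF)).2
  calc #F ≤ #(Icc i₀ (i₀ + ⌊2 * w / |A|⌋₊)) := card_le_card fun i hi => ?_
    _ = ⌊2 * w / |A|⌋₊ + 1 := by rw [Nat.card_Icc]; omega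
  have hle : i₀ ≤ i := F.min'_le i hi
  have hdist : ((i - i₀ : ℕ) : ℝ) * |A| ≤ 2 * w := by
    rw [Nat.cast_sub hle, ← abs_of_nonneg (sub_nonneg.2 (Nat.cast_le.2 hle)), ← abs_mul]
    calc |((i : ℝ) - i₀) * A| = |(A * i + d) - (A * i₀ + d)| := by ring_nf
      _ ≤ |A * i + d| + |A * i₀ + d| := abs_sub _ _
      _ ≤ 2 * w := by linarith [(mem_filter.1 hi).2]
  have : i - i₀ ≤ ⌊2 * w / |A|⌋₊ := Nat.le_floor ((le_div_iff₀ (abs_pos.2 hA)).2 hdist)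
  exact mem_Icc.2 ⟨hle, by omega⟩

lemma card_filter_strip_le (N₁ N₂ : ℕ) (A B c γ : ℝ) (hγ : 0 < γ) (hγAB : γ ≤ max |A| |B|) :
    #{q ∈ range N₁ ×ˢ range N₂ | |A * q.1 + B * q.2 + c| ≤ γ + |A| + |B|} ≤
      7 * max N₁ N₂ := by
  wlog hBA : |B| ≤ |A| generalizing N₁ N₂ A B
  · have hswap : #{q ∈ range N₁ ×ˢ range N₂ | |A * q.1 + B * q.2 + c| ≤ γ + |A| + |B|} =
        #{q ∈ range N₂ ×ˢ range N₁ | |B * q.1 + A * q.2 + c| ≤ γ + |B| + |A|} :=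
      card_equiv (Equiv.prodComm ℕ ℕ) fun q => by
        simp only [mem_filter, mem_product, mem_range, Equiv.prodComm_apply, Prod.fst_swap,
          Prod.snd_swap]
        rw [add_comm (B * _), add_right_comm γ |B|]
        tauto
    rw [hswap, max_comm N₁]
    exact this N₂ N₁ B A (max_comm |A| |B| ▸ hγAB) (le_of_not_ge hBA)
  have hA : γ ≤ |A| := max_eq_left hBA ▸ hγAB
  have hA0 : A ≠ 0 := abs_pos.1 (hγ.trans_le hA)
  calc _ ≤ 7 * #(range N₂) :=
        card_le_mul_card_image_of_maps_to (f := Prod.snd)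
          (fun q hq => (mem_product.1 (mem_filter.1 hq).1).2) 7 fun j _ => ?_
    _ ≤ 7 * max N₁ N₂ := by rw [card_range]; gcongr; exact le_max_right _ _
  calc _ ≤ #{i ∈ range N₁ | |A * (i : ℕ) + (B * j + c)| ≤ γ + |A| + |B|} := by
        refine card_le_card_of_injOn Prod.fst (fun q hq => ?_) fun q hq q' hq' h => ?_
        · simp only [mem_coe, mem_filter, mem_product, mem_range] at hq ⊢
          rw [← hq.2, ← add_assoc]
          exact ⟨hq.1.1.1, hq.1.2⟩
        · simp only [mem_coe, mem_filter] at hq hq'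
          exact Prod.ext h (hq.2.trans hq'.2.symm)
    _ ≤ ⌊2 * (γ + |A| + |B|) / |A|⌋₊ + 1 := card_filter_abs_le _ _ _ _ hA0
    _ ≤ 7 := by
        have : 2 * (γ + |A| + |B|) / |A| ≤ (6 : ℕ) := by
          rw [div_le_iff₀ (abs_pos.2 hA0)]; push_cast; linarith
        have := Nat.floor_le_of_le this
        omega

def pairing (η : ℝ × ℝ) (m : ℤ × ℤ) : ℝ := η.1 * m.1 + η.2 * m.2

noncomputable def boxWidth (n : ℕ) : ℝ := ((2 : ℝ) ^ (32 * n + 32))⁻¹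

noncomputable def boxHeight (n : ℕ) : ℝ := ((2 : ℝ) ^ (16 * n + 32))⁻¹

def box (n : ℕ) (p : ℝ × ℝ) : Set (ℝ × ℝ) :=
  Set.Icc p.1 (p.1 + boxWidth n) ×ˢ Set.Icc p.2 (p.2 + boxHeight n)

noncomputable def subCorner (n : ℕ) (p : ℝ × ℝ) (q : ℕ × ℕ) : ℝ × ℝ :=
  (p.1 + q.1 * boxWidth (n + 1), p.2 + q.2 * boxHeight (n + 1))

lemma boxWidth_pos (n : ℕ) : 0 < boxWidth n := by unfold boxWidth; positivity

lemma boxHeight_pos (n : ℕ) : 0 < boxHeight n := by unfold boxHeight; positivity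

lemma isCompact_box (n : ℕ) (p : ℝ × ℝ) : IsCompact (box n p) :=
  isCompact_Icc.prod isCompact_Icc

lemma isClosed_box (n : ℕ) (p : ℝ × ℝ) : IsClosed (box n p) :=
  isClosed_Icc.prod isClosed_Icc

lemma box_nonempty (n : ℕ) (p : ℝ × ℝ) : (box n p).Nonempty :=
  (Set.nonempty_Icc.2 (le_add_of_nonneg_right (boxWidth_pos n).le)).prod
    (Set.nonempty_Icc.2 (le_add_of_nonneg_right (boxHeight_pos n).le))

lemma box_subCorner_subset {n : ℕ} (p : ℝ × ℝ) {q : ℕ × ℕ} (hq₁ : q.1 < 2 ^ 32)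
    (hq₂ : q.2 < 2 ^ 16) : box (n + 1) (subCorner n p q) ⊆ box n p := by
  have h₁ : (q.1 + 1 : ℝ) ≤ 2 ^ 32 := by exact_mod_cast hq₁
  have h₂ : (q.2 + 1 : ℝ) ≤ 2 ^ 16 := by exact_mod_cast hq₂
  have hW : boxWidth n = 2 ^ 32 * boxWidth (n + 1) := by
    simp only [boxWidth, show 32 * (n + 1) + 32 = 32 * n + 32 + 32 by ring, pow_add]
    field_simp
  have hH : boxHeight n = 2 ^ 16 * boxHeight (n + 1) := by
    simp only [boxHeight, show 16 * (n + 1) + 32 = 16 * n + 32 + 16 by ring, pow_add]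
    field_simp
  have hW' := mul_le_mul_of_nonneg_right h₁ (boxWidth_pos (n + 1)).le
  have hH' := mul_le_mul_of_nonneg_right h₂ (boxHeight_pos (n + 1)).le
  have := mul_nonneg (Nat.cast_nonneg q.1 : (0 : ℝ) ≤ q.1) (boxWidth_pos (n + 1)).le
  have := mul_nonneg (Nat.cast_nonneg q.2 : (0 : ℝ) ≤ q.2) (boxHeight_pos (n + 1)).le
  rintro η ⟨⟨h₃, h₄⟩, h₅, h₆⟩
  simp only [subCorner] at h₃ h₄ h₅ h₆
  exact ⟨⟨by linarith, by linarith⟩, by linarith, by linarith⟩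

lemma pairing_subCorner (n : ℕ) (p : ℝ × ℝ) (q : ℕ × ℕ) (m : ℤ × ℤ) :
    pairing (subCorner n p q) m =
      m.1 * boxWidth (n + 1) * q.1 + m.2 * boxHeight (n + 1) * q.2 + pairing p m := by
  simp only [pairing, subCorner]; ring

lemma abs_pairing_sub_le_of_mem_box {n : ℕ} {c η : ℝ × ℝ} (hη : η ∈ box n c) (m : ℤ × ℤ) :
    |pairing η m - pairing c m| ≤ |m.1 * boxWidth n| + |m.2 * boxHeight n| := by
  obtain ⟨⟨h₁, h₂⟩, h₃, h₄⟩ := hη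
  have e : pairing η m - pairing c m = m.1 * (η.1 - c.1) + m.2 * (η.2 - c.2) := by
    simp only [pairing]; ring
  have hW : |η.1 - c.1| ≤ |boxWidth n| :=
    abs_le_abs (by linarith) (by linarith [boxWidth_pos n])
  have hH : |η.2 - c.2| ≤ |boxHeight n| :=
    abs_le_abs (by linarith) (by linarith [boxHeight_pos n])
  rw [e]
  exact (abs_add_le _ _).trans
    (add_le_add (by rw [abs_mul, abs_mul]; gcongr) (by rw [abs_mul, abs_mul]; gcongr))

lemma abs_mul_boxWidth_le_one {m : ℤ × ℤ} {n : ℕ} (hm : m ∈ block n) :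
    |m.1 * boxWidth n| ≤ 1 := by
  rw [abs_mul, abs_of_pos (boxWidth_pos n), boxWidth, ← div_eq_mul_inv,
    div_le_one (by positivity)]
  exact (le_max_left _ _).trans hm.2.le

lemma abs_mul_boxHeight_le_one {m : ℤ × ℤ} {n : ℕ} (hm : m ∈ block n) :
    |m.2 * boxHeight n| ≤ 1 := by
  rw [abs_mul, abs_of_pos (boxHeight_pos n), boxHeight, ← div_eq_mul_inv,
    div_le_one (by positivity)]
  have hsq : (m.2 : ℝ) ^ 2 < (2 ^ (16 * n + 16)) ^ 2 := by
    rw [← pow_mul]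
    exact (le_max_right _ _).trans_lt (hm.2.trans_eq (by ring_nf))
  exact (abs_lt_of_sq_lt_sq hsq (by positivity)).le.trans
    (pow_le_pow_right₀ one_le_two (by omega))

lemma le_max_abs_mul_box_succ {m : ℤ × ℤ} {n : ℕ} (hm : m ∈ block n) :
    (2 ^ 64 : ℝ)⁻¹ ≤ max |m.1 * boxWidth (n + 1)| |m.2 * boxHeight (n + 1)| := by
  rw [abs_mul, abs_mul, abs_of_pos (boxWidth_pos _), abs_of_pos (boxHeight_pos _)]
  rcases le_max_iff.1 hm.1 with h | h
  · refine le_max_of_le_left ?_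
    calc (2 ^ 64 : ℝ)⁻¹ = 2 ^ (32 * n) * boxWidth (n + 1) := by
          simp only [boxWidth, show 32 * (n + 1) + 32 = 32 * n + 64 by ring, pow_add]
          field_simp
      _ ≤ |(m.1 : ℝ)| * boxWidth (n + 1) := mul_le_mul_of_nonneg_right h (boxWidth_pos _).le
  · refine le_max_of_le_right ?_
    have h' : (2 : ℝ) ^ (16 * n) ≤ |(m.2 : ℝ)| := by
      have hsq : ((2 : ℝ) ^ (16 * n)) ^ 2 ≤ (m.2 : ℝ) ^ 2 := by
        rwa [← pow_mul, show 16 * n * 2 = 32 * n by ring]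
      simpa using sq_le_sq.1 hsq
    calc (2 ^ 64 : ℝ)⁻¹ ≤ (2 ^ 48)⁻¹ := by norm_num
      _ = 2 ^ (16 * n) * boxHeight (n + 1) := by
          simp only [boxHeight, show 16 * (n + 1) + 32 = 16 * n + 48 by ring, pow_add]
          field_simp
      _ ≤ |(m.2 : ℝ)| * boxHeight (n + 1) := mul_le_mul_of_nonneg_right h' (boxHeight_pos _).le

lemma card_Icc_ceil_sub_floor_add_le (x : ℝ) : #(Icc ⌈x - 3⌉ ⌊x + 3⌋) ≤ 7 := by
  have : ((⌊x + 3⌋ - ⌈x - 3⌉ : ℤ) : ℝ) ≤ 6 := by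
    push_cast; linarith [Int.floor_le (x + 3), Int.le_ceil (x - 3)]
  have : ⌊x + 3⌋ - ⌈x - 3⌉ ≤ 6 := by exact_mod_cast this
  rw [Int.card_Icc]
  omega

/-- The `2 ^ 48` subboxes of level `n + 1` outnumber the at most `512 * 7 * (7 * 2 ^ 32)` that
meet a strip `|pairing η m - k| < 2⁻⁶⁴` with `m ∈ S ∩ block n`: on `box n p` only `7` integers `k`
are within reach of `pairing η m`, and each strip meets at most `7 * 2 ^ 32` subboxes. -/
lemma exists_box_succ_subset_forall_le_dni (S : Set (ℤ × ℤ)) (n : ℕ)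
    (hS : (S ∩ block n).encard ≤ 512) (p : ℝ × ℝ) :
    ∃ p', box (n + 1) p' ⊆ box n p ∧
      ∀ m ∈ S ∩ block n, ∀ η ∈ box (n + 1) p', (2 ^ 64 : ℝ)⁻¹ ≤ dni (pairing η m) := by
  obtain ⟨F, hF⟩ := (Set.finite_of_encard_le_coe hS).exists_finset_coe
  have hFcard : #F ≤ 512 := by
    rw [← hF, Set.encard_coe_eq_coe_finsetCard] at hS; exact_mod_cast hS
  -- opaque grid sizes keep `range (2 ^ 32)` from being unfolded
  obtain ⟨N₁, hN₁⟩ : ∃ N : ℕ, N = 2 ^ 32 := ⟨_, rfl⟩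
  obtain ⟨N₂, hN₂⟩ : ∃ N : ℕ, N = 2 ^ 16 := ⟨_, rfl⟩
  set γ : ℝ := (2 ^ 64)⁻¹
  let A (m : ℤ × ℤ) : ℝ := m.1 * boxWidth (n + 1)
  let B (m : ℤ × ℤ) : ℝ := m.2 * boxHeight (n + 1)
  let strip (m : ℤ × ℤ) (k : ℤ) : Finset (ℕ × ℕ) :=
    {q ∈ range N₁ ×ˢ range N₂ | |A m * q.1 + B m * q.2 + (pairing p m - k)| ≤ γ + |A m| + |B m|}
  let near (m : ℤ × ℤ) : Finset ℤ := Icc ⌈pairing p m - 3⌉ ⌊pairing p m + 3⌋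
  have hbad : #(F.biUnion fun m => (near m).biUnion (strip m)) < #(range N₁ ×ˢ range N₂) := by
    calc _ ≤ #F * (7 * (7 * N₁)) := by
          refine card_biUnion_le_card_mul _ _ _ fun m hm => ?_
          refine (card_biUnion_le_card_mul _ _ _ fun k _ => ?_).trans
            (Nat.mul_le_mul_right _ (card_Icc_ceil_sub_floor_add_le _))
          have hm' : m ∈ block n := by rw [← mem_coe, hF] at hm; exact hm.2
          have := card_filter_strip_le N₁ N₂ (A m) (B m) (pairing p m - k) γ (by positivity)
            (le_max_abs_mul_box_succ hm')
          rwa [max_eq_left (by rw [hN₁, hN₂]; norm_num)] at this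
      _ ≤ 512 * (7 * (7 * N₁)) := Nat.mul_le_mul_right _ hFcard
      _ < #(range N₁ ×ˢ range N₂) := by
          rw [card_product, card_range, card_range, hN₁, hN₂]; norm_num
  obtain ⟨q, hqG, hq⟩ := exists_mem_notMem_of_card_lt_card hbad
  have hq₁ : q.1 < 2 ^ 32 := hN₁ ▸ mem_range.1 (mem_product.1 hqG).1
  have hq₂ : q.2 < 2 ^ 16 := hN₂ ▸ mem_range.1 (mem_product.1 hqG).2
  refine ⟨subCorner n p q, box_subCorner_subset p hq₁ hq₂, fun m hm η hη => ?_⟩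
  by_contra! hlt
  set k := round (pairing η m)
  have hk : |pairing η m - k| < γ := hlt
  have hfar : |pairing η m - pairing p m| ≤ 2 := by
    have := abs_pairing_sub_le_of_mem_box (box_subCorner_subset p hq₁ hq₂ hη) m
    linarith [abs_mul_boxWidth_le_one hm.2, abs_mul_boxHeight_le_one hm.2]
  have hnear : |pairing η m - pairing (subCorner n p q) m| ≤ |A m| + |B m| :=
    abs_pairing_sub_le_of_mem_box hη m
  have hγ : γ ≤ 1 := inv_le_one_of_one_le₀ (one_le_pow₀ one_le_two)
  have hmF : m ∈ F := by rw [← mem_coe, hF]; exact hm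
  refine hq (mem_biUnion.2 ⟨m, hmF, mem_biUnion.2 ⟨k, ?_, mem_filter.2 ⟨hqG, ?_⟩⟩⟩)
  · rw [abs_lt] at hk
    rw [abs_le] at hfar
    exact mem_Icc.2 ⟨Int.ceil_le.2 (by linarith), Int.le_floor.2 (by linarith)⟩
  · rw [pairing_subCorner] at hnear
    calc _ = |(pairing η m - k) - (pairing η m - (A m * q.1 + B m * q.2 + pairing p m))| := by
          ring_nf
      _ ≤ |pairing η m - k| + |pairing η m - (A m * q.1 + B m * q.2 + pairing p m)| := abs_sub _ _
      _ ≤ γ + |A m| + |B m| := by linarith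

theorem exists_forall_le_dni_of_encard_inter_block_le (S : Set (ℤ × ℤ))
    (hS : ∀ n, (S ∩ block n).encard ≤ 512) :
    ∃ η : ℝ × ℝ, ∀ m ∈ S, m ≠ 0 → (2 ^ 64 : ℝ)⁻¹ ≤ dni (pairing η m) := by
  choose next hnext using fun n => exists_box_succ_subset_forall_le_dni S n (hS n)
  let corner (n : ℕ) : ℝ × ℝ := Nat.rec 0 next n
  obtain ⟨η, hη⟩ := IsCompact.nonempty_iInter_of_sequence_nonempty_isCompact_isClosed
    (fun n => box n (corner n)) (fun n => (hnext n (corner n)).1) (fun n => box_nonempty n _)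
    (isCompact_box 0 _) (fun n => isClosed_box n _)
  refine ⟨η, fun m hmS hm => ?_⟩
  exact (hnext _ _).2 m ⟨hmS, mem_block_dyadicShell_div hm⟩ η (Set.mem_iInter.1 hη _)

/-- there is `(η₁, η₂)` with the linear form at all best
approximation vectors bounded away from zero. -/
theorem stmt_9 (θ₁ θ₂ : ℝ) (h : LinIndep θ₁ θ₂) :
    ∃ η₁ η₂ : ℝ, ∃ γ > (0 : ℝ), ∀ m : ℤ × ℤ, IsBestApprox θ₁ θ₂ m →
      γ ≤ dni (η₁ * m.1 + η₂ * m.2) := by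
  obtain ⟨η, hη⟩ := exists_forall_le_dni_of_encard_inter_block_le (posMinimalTails θ₁ θ₂)
    (encard_inter_block_le _ fun _ hm _ hm' => posMinimalTails_eq_of_wsize_sub_le hm hm')
  refine ⟨η.1, η.2, (2 ^ 64)⁻¹, by positivity, fun m hm => ?_⟩
  rcases hm.mem_posMinimalTails_or_neg_mem h with hpos | hneg
  · exact hη m hpos hm.1
  · have hpair : pairing η (-m) = -(η.1 * m.1 + η.2 * m.2) := by simp [pairing]; ring
    have := hη (-m) hneg (neg_ne_zero.2 hm.1)
    rwa [hpair, dni_neg] at this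
end
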